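/- arXiv:1507.06496 — 4 statements merged into one kernel-verified Lean document; each statement's English description precedes it below -/
import Mathlib

section
/- Let K ⊆ ℝⁿ be a closed convex cone with polar cone K° = {x : ∀ k ∈ K, ⟨k, x⟩ ≤ 0}, and let y ∈ ℝⁿ. If x̂ is the projection of y onto K and x̂° is the projection of y onto K°, then ⟨x̂, x̂°⟩ = 0 and y = x̂ + x̂° (Moreau decomposition, forward direction). -/
/-!
Both projections are characterised by variational inequalities: `v` is the projection of
`y` onto a convex set `S` iff `⟪y - v, w - v⟫ ≤ 0` for all `w ∈ S`, and two points
satisfying this inequality coincide. Testing the inequality for `K` against `0` and `2 • x̂` shows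
`⟪y - x̂, x̂⟫ = 0`, whence `y - x̂ ∈ Kᵒ`, and then `y - x̂` satisfies the inequality for `Kᵒ`.
So `x̂ᵒ = y - x̂`.
-/

open scoped RealInnerProductSpace

variable {F : Type*} [NormedAddCommGroup F] [InnerProductSpace ℝ F]

def polarCone (K : Set F) : Set F := {x | ∀ k ∈ K, ⟪k, x⟫ ≤ 0}

theorem convex_polarCone (K : Set F) : Convex ℝ (polarCone K) := by
  have : polarCone K = ⋂ k ∈ K, {x | ⟪k, x⟫ ≤ 0} := by
    ext x
    simp [polarCone]
  rw [this]
  exact convex_iInter₂ fun k _ => convex_halfSpace_le (innerₛₗ ℝ k).isLinear 0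

theorem inner_sub_sub_nonpos_of_forall_norm_sub_le {S : Set F} (hS : Convex ℝ S)
    {y v : F} (hv : v ∈ S) (hmin : ∀ z ∈ S, ‖v - y‖ ≤ ‖z - y‖) : ∀ w ∈ S, ⟪y - v, w - v⟫ ≤ 0 := by
  have : Nonempty S := ⟨⟨v, hv⟩⟩
  refine (norm_eq_iInf_iff_real_inner_le_zero hS hv).mp (le_antisymm ?_ ?_)
  · exact le_ciInf fun w => by simpa only [norm_sub_rev y] using hmin w w.2
  · exact ciInf_le ⟨0, by rintro r ⟨w, rfl⟩; exact norm_nonneg _⟩ (⟨v, hv⟩ : S)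

theorem eq_of_inner_sub_sub_nonpos {y u v : F} (hu : ⟪y - u, v - u⟫ ≤ 0)
    (hv : ⟪y - v, u - v⟫ ≤ 0) : u = v := by
  have hsq : ⟪v - u, v - u⟫ = ⟪y - u, v - u⟫ + ⟪y - v, u - v⟫ := by
    rw [← neg_sub v u, inner_neg_right, ← sub_eq_add_neg, ← inner_sub_left,
      sub_sub_sub_cancel_left]
  have : v - u = 0 := real_inner_self_nonpos.mp (by linarith)
  exact (sub_eq_zero.mp this).symm

section Cone

variable {K : Set F} {y v : F}

theorem inner_sub_self_eq_zero_of_cone (hcone : ∀ c : ℝ, 0 ≤ c → ∀ x ∈ K, c • x ∈ K)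
    (hv : v ∈ K) (hvi : ∀ w ∈ K, ⟪y - v, w - v⟫ ≤ 0) : ⟪y - v, v⟫ = 0 := by
  have h0 := hvi _ (hcone 0 le_rfl v hv)
  have h2 := hvi _ (hcone 2 zero_le_two v hv)
  rw [zero_smul, zero_sub, inner_neg_right] at h0
  rw [two_smul, add_sub_cancel_right] at h2
  linarith

theorem sub_mem_polarCone_of_cone (hcone : ∀ c : ℝ, 0 ≤ c → ∀ x ∈ K, c • x ∈ K)
    (hv : v ∈ K) (hvi : ∀ w ∈ K, ⟪y - v, w - v⟫ ≤ 0) : y - v ∈ polarCone K := by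
  intro k hk
  have h := hvi k hk
  rw [inner_sub_right, inner_sub_self_eq_zero_of_cone hcone hv hvi, sub_zero] at h
  rwa [real_inner_comm]

theorem inner_sub_sub_nonpos_polarCone_of_cone
    (hcone : ∀ c : ℝ, 0 ≤ c → ∀ x ∈ K, c • x ∈ K) (hv : v ∈ K) (hvi : ∀ w ∈ K, ⟪y - v, w - v⟫ ≤ 0) :
    ∀ w ∈ polarCone K, ⟪y - (y - v), w - (y - v)⟫ ≤ 0 := by
  intro w hw
  rw [sub_sub_cancel, inner_sub_right, real_inner_comm (y - v) v,
    inner_sub_self_eq_zero_of_cone hcone hv hvi, sub_zero]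
  exact hw v hv

end Cone

theorem moreau_forward_general (n : ℕ) (K : Set (EuclideanSpace ℝ (Fin n)))
    (hconv : Convex ℝ K)
    (hcone : ∀ (c : ℝ), 0 ≤ c → ∀ x ∈ K, c • x ∈ K)
    (y xhat xhato : EuclideanSpace ℝ (Fin n))
    (hx : xhat ∈ K) (hxmin : ∀ z ∈ K, ‖xhat - y‖ ≤ ‖z - y‖)
    (hxo : xhato ∈ {x : EuclideanSpace ℝ (Fin n) | ∀ k ∈ K, ⟪k, x⟫ ≤ 0})
    (hxomin : ∀ z ∈ {x : EuclideanSpace ℝ (Fin n) | ∀ k ∈ K, ⟪k, x⟫ ≤ 0},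
      ‖xhato - y‖ ≤ ‖z - y‖) :
    ⟪xhat, xhato⟫ = 0 ∧ y = xhat + xhato := by
  have hvi := inner_sub_sub_nonpos_of_forall_norm_sub_le hconv hx hxmin
  have hvio := inner_sub_sub_nonpos_of_forall_norm_sub_le (convex_polarCone K) hxo hxomin
  have hxo_eq : xhato = y - xhat :=
    eq_of_inner_sub_sub_nonpos (hvio _ (sub_mem_polarCone_of_cone hcone hx hvi))
      (inner_sub_sub_nonpos_polarCone_of_cone hcone hx hvi xhato hxo)
  subst hxo_eq
  exact ⟨by rw [real_inner_comm]; exact inner_sub_self_eq_zero_of_cone hcone hx hvi,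
    (add_sub_cancel xhat y).symm⟩

/-- Moreau decomposition, forward direction: if `x̂` is the projection of `y`
onto a closed convex cone `K` and `x̂ᵒ` is the projection of `y` onto the polar
cone `Kᵒ`, then `⟪x̂, x̂ᵒ⟫ = 0` and `y = x̂ + x̂ᵒ`. -/
theorem moreau_forward (n : ℕ) (K : Set (EuclideanSpace ℝ (Fin n)))
    (hne : K.Nonempty) (hcl : IsClosed K) (hconv : Convex ℝ K)
    (hcone : ∀ (c : ℝ), 0 ≤ c → ∀ x ∈ K, c • x ∈ K)
    (y xhat xhato : EuclideanSpace ℝ (Fin n))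
    (hx : xhat ∈ K) (hxmin : ∀ z ∈ K, ‖xhat - y‖ ≤ ‖z - y‖)
    (hxo : xhato ∈ {x : EuclideanSpace ℝ (Fin n) | ∀ k ∈ K, ⟪k, x⟫ ≤ 0})
    (hxomin : ∀ z ∈ {x : EuclideanSpace ℝ (Fin n) | ∀ k ∈ K, ⟪k, x⟫ ≤ 0},
      ‖xhato - y‖ ≤ ‖z - y‖) :
    ⟪xhat, xhato⟫ = 0 ∧ y = xhat + xhato :=
  moreau_forward_general n K hconv hcone y xhat xhato hx hxmin hxo hxomin
end

section
/- Let A be an m × n real matrix and K = {x ∈ ℝⁿ : Ax ≤ 0}. Then the polar cone of K equals {Aᵀa : a ∈ ℝᵐ, a ≥ 0}, i.e., the rows of A generate K° (a Farkas-type lemma). -/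
/-!
`K` is minus the inner dual of the set of rows of `A`, so `K°` is the double inner dual of the
rows, which is the conical hull of the rows as soon as that hull is closed. Closedness is the
conic Carathéodory theorem: a finitely generated cone is a finite union of cones spanned by
linearly independent vectors, and each of those is the image of the closed orthant under a
linear embedding.
-/

open Matrix Set
open scoped RealInnerProductSpace

namespace PointedCone

variable {R 𝕜 E ι : Type*} [Fintype ι]

lemma mem_hull_range_iff [Semiring R] [PartialOrder R] [IsOrderedRing R] [AddCommMonoid E]
    [Module R E] {v : ι → E} {x : E} :
    x ∈ hull R (range v) ↔ ∃ a : ι → R, (∀ i, 0 ≤ a i) ∧ ∑ i, a i • v i = x := by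
  rw [Submodule.mem_span_range_iff_exists_fun]
  constructor
  · rintro ⟨c, rfl⟩
    exact ⟨fun i ↦ c i, fun i ↦ (c i).2, rfl⟩
  · rintro ⟨a, ha, rfl⟩
    exact ⟨fun i ↦ ⟨a i, ha i⟩, rfl⟩

section LinearOrderedField

variable [Field 𝕜] [LinearOrder 𝕜] [IsStrictOrderedRing 𝕜] [AddCommGroup E] [Module 𝕜 E]

lemma exists_nonneg_coeff_eq_zero_of_not_linearIndependent {v : ι → E}
    (hv : ¬LinearIndependent 𝕜 v) {a : ι → 𝕜} (ha : ∀ i, 0 ≤ a i) :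
    ∃ b : ι → 𝕜, (∀ i, 0 ≤ b i) ∧ (∃ j, b j = 0) ∧ ∑ i, b i • v i = ∑ i, a i • v i := by
  obtain ⟨c, hc, j₀, hj₀⟩ : ∃ c : ι → 𝕜, ∑ i, c i • v i = 0 ∧ ∃ j, 0 < c j := by
    obtain ⟨g, hg, i, hi⟩ := Fintype.not_linearIndependent_iff.mp hv
    rcases hi.lt_or_gt with h | h
    · exact ⟨-g, by simp [Finset.sum_neg_distrib, hg], i, by simpa using h⟩
    · exact ⟨g, hg, i, h⟩
  -- `b = a - t • c` with `t = min {a i / c i | 0 < c i}`, the largest step keeping `b ≥ 0`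
  obtain ⟨j, hj, hmin⟩ := {i | 0 < c i}.toFinset.exists_min_image (fun i ↦ a i / c i)
    ⟨j₀, by simpa using hj₀⟩
  simp only [mem_toFinset, mem_ofPred_eq] at hj hmin
  refine ⟨fun i ↦ a i - a j / c j * c i, fun i ↦ sub_nonneg.mpr ?_,
    ⟨j, by simp [div_mul_cancel₀ _ hj.ne']⟩, ?_⟩
  · rcases lt_or_ge 0 (c i) with hci | hci
    · exact (le_div_iff₀ hci).mp (hmin i hci)
    · exact (mul_nonpos_of_nonneg_of_nonpos (div_nonneg (ha j) hj.le) hci).trans (ha i)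
  · simp only [sub_smul, Finset.sum_sub_distrib, mul_smul, ← Finset.smul_sum, hc, smul_zero,
      sub_zero]

lemma hull_range_subset_iUnion_of_not_linearIndependent {v : ι → E}
    (hv : ¬LinearIndependent 𝕜 v) :
    (hull 𝕜 (range v) : Set E) ⊆ ⋃ j, hull 𝕜 (v '' {j}ᶜ) := by
  intro x hx
  obtain ⟨a, ha, rfl⟩ := mem_hull_range_iff.mp hx
  obtain ⟨b, hb, ⟨j, hbj⟩, hba⟩ := exists_nonneg_coeff_eq_zero_of_not_linearIndependent hv ha
  refine mem_iUnion.mpr ⟨j, hba ▸ Submodule.sum_mem _ fun i _ ↦ ?_⟩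
  rcases eq_or_ne i j with rfl | hij
  · simp [hbj]
  · exact smul_mem _ (hb i) (subset_hull (mem_image_of_mem v hij))

end LinearOrderedField

section Topology

variable [AddCommGroup E] [TopologicalSpace E] [IsTopologicalAddGroup E] [Module ℝ E]
  [ContinuousSMul ℝ E] [T2Space E]

lemma isClosed_hull_range_of_linearIndependent {v : ι → E} (hv : LinearIndependent ℝ v) :
    IsClosed (hull ℝ (range v) : Set E) := by
  have hrange : (hull ℝ (range v) : Set E) = Fintype.linearCombination ℝ v '' Ici 0 := by
    ext x
    simp [mem_hull_range_iff, Fintype.linearCombination_apply, Pi.le_def]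
  rw [hrange]
  exact (LinearMap.isClosedEmbedding_of_injective (LinearMap.ker_eq_bot.mpr
    hv.fintypeLinearCombination_injective)).isClosedMap _ isClosed_Ici

lemma isClosed_hull_finset [FiniteDimensional ℝ E] (s : Finset E) :
    IsClosed (hull ℝ (s : Set E) : Set E) := by
  classical
  induction s using Finset.strongInduction with
  | H s ih =>
  have hs : (s : Set E) = range ((↑) : s → E) := Subtype.range_coe.symm
  by_cases hli : LinearIndependent ℝ ((↑) : s → E)
  · rw [hs]
    exact isClosed_hull_range_of_linearIndependent hli
  have hunion : (hull ℝ (s : Set E) : Set E) = ⋃ x : s, hull ℝ (s.erase x : Set E) := by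
    refine subset_antisymm ?_ (iUnion_subset fun x ↦ Submodule.span_mono (by simp))
    rw [hs]
    refine (hull_range_subset_iUnion_of_not_linearIndependent hli).trans
      (iUnion_mono fun x ↦ Submodule.span_mono ?_)
    rintro _ ⟨y, hy, rfl⟩
    simpa [Subtype.val_injective.ne_iff] using hy
  rw [hunion]
  exact isClosed_iUnion_of_finite fun x ↦ ih _ (Finset.erase_ssubset x.2)

lemma isClosed_hull_of_finite [FiniteDimensional ℝ E] {s : Set E} (hs : s.Finite) :
    IsClosed (hull ℝ s : Set E) := by
  simpa using isClosed_hull_finset hs.toFinset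

end Topology

end PointedCone

namespace ProperCone

variable {E : Type*} [NormedAddCommGroup E] [InnerProductSpace ℝ E] [FiniteDimensional ℝ E]

lemma coe_innerDual_innerDual_of_finite {s : Set E} (hs : s.Finite) :
    (innerDual (innerDual s : Set E) : Set E) = PointedCone.hull ℝ s := by
  have := FiniteDimensional.complete ℝ E
  let C : ProperCone ℝ E := ⟨PointedCone.hull ℝ s, PointedCone.isClosed_hull_of_finite hs⟩
  have : innerDual s = innerDual (C : Set E) :=
    toPointedCone_injective (PointedCone.dual_hull s).symm
  rw [this, innerDual_innerDual]
  rfl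

theorem polar_setOf_inner_nonpos_eq_hull {ι : Type*} [Finite ι] (v : ι → E) :
    {x : E | ∀ k, (∀ i, ⟪v i, k⟫ ≤ 0) → ⟪k, x⟫ ≤ 0} = PointedCone.hull ℝ (range v) := by
  rw [← coe_innerDual_innerDual_of_finite (finite_range v)]
  ext x
  simp only [mem_ofPred_eq, SetLike.mem_coe, mem_innerDual, forall_mem_range]
  rw [← (Equiv.neg E).forall_congr_right]
  simp [inner_neg_left, inner_neg_right]

end ProperCone

/-- Farkas-type lemma: the polar cone of `K = {x | Ax ≤ 0}` equals the conical
hull of the rows of `A`, i.e. `{Aᵀa : a ≥ 0}`. -/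
theorem polar_eq_rows_cone (m n : ℕ) (A : Matrix (Fin m) (Fin n) ℝ) :
    {x : EuclideanSpace ℝ (Fin n) |
        ∀ k ∈ {k : EuclideanSpace ℝ (Fin n) | ∀ i, A.mulVec k i ≤ 0},
          ⟪k, x⟫ ≤ 0} =
      {x : EuclideanSpace ℝ (Fin n) |
        ∃ a : Fin m → ℝ, (∀ i, 0 ≤ a i) ∧ x = Aᵀ.mulVec a} := by
  let rows : Fin m → EuclideanSpace ℝ (Fin n) := fun i ↦ WithLp.toLp 2 (A i)
  have inner_rows (i) (k : EuclideanSpace ℝ (Fin n)) : ⟪rows i, k⟫ = A.mulVec k i := by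
    simp [rows, EuclideanSpace.inner_eq_star_dotProduct, mulVec, dotProduct_comm]
  have sum_rows (a : Fin m → ℝ) : (∑ i, a i • rows i).ofLp = Aᵀ.mulVec a := by
    simp [rows, mulVec_transpose, vecMul_eq_sum]
  simp only [mem_ofPred_eq, ← inner_rows]
  rw [ProperCone.polar_setOf_inner_nonpos_eq_hull rows]
  ext x
  simp only [SetLike.mem_coe, PointedCone.mem_hull_range_iff, mem_ofPred_eq, ← sum_rows]
  exact exists_congr fun a ↦
    and_congr_right' (eq_comm.trans (WithLp.ofLp_injective 2).eq_iff.symm)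
end

section
/- Let A be an m × n real matrix with K = {x : Ax ≤ 0}, and y ∈ ℝⁿ. If λ̂ ∈ ℝᵐ minimizes ‖y - Aᵀλ‖² over λ ≥ 0, then x̂ = y - Aᵀλ̂ is the projection of y onto K (Kuhn–Tucker duality for cone projection). -/
open Matrix
open scoped RealInnerProductSpace

/-!
The points `Aᵀλ` with `λ ≥ 0` form a convex cone `C`, and `p = Aᵀλ̂` is the nearest point of `C`
to `y`. The variational inequality `⟪y - p, q - p⟫ ≤ 0` for `q ∈ C`, tested at `q = 0`, `2p` and
`p + c`, gives `⟪y - p, p⟫ = 0` and `⟪y - p, c⟫ ≤ 0` on `C`, i.e. `y - p` lies in the polar cone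
of `C`, which is `K`. For `z ∈ K` one then has `⟪z - (y - p), p⟫ ≤ 0`, whence
`‖z - y‖² = ‖z - (y - p)‖² - 2⟪z - (y - p), p⟫ + ‖p‖² ≥ ‖p‖²`.
-/

/-- Interpret a plain vector `Fin n → ℝ` as a point of Euclidean space. -/
noncomputable def toE {n : ℕ} (v : Fin n → ℝ) : EuclideanSpace ℝ (Fin n) :=
  (WithLp.equiv 2 ((i : Fin n) → ℝ)).symm v

namespace PointedCone

variable {E : Type*} [NormedAddCommGroup E] [InnerProductSpace ℝ E]
  {C : PointedCone ℝ E} {y p : E}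

theorem inner_sub_sub_nonpos_of_isMinOn (hp : p ∈ C)
    (hmin : IsMinOn (fun q => ‖y - q‖) C p) {q : E} (hq : q ∈ C) :
    ⟪y - p, q - p⟫ ≤ 0 := by
  have hinf : ‖y - p‖ = ⨅ w : C, ‖y - w‖ :=
    le_antisymm (le_ciInf fun w => hmin w.2)
      (ciInf_le ⟨0, by rintro _ ⟨w, rfl⟩; positivity⟩ (⟨p, hp⟩ : C))
  exact (norm_eq_iInf_iff_real_inner_le_zero C.convex hp).1 hinf q hq

theorem inner_sub_nonpos_of_isMinOn (hp : p ∈ C)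
    (hmin : IsMinOn (fun q => ‖y - q‖) C p) {q : E} (hq : q ∈ C) :
    ⟪y - p, q⟫ ≤ 0 := by
  simpa using inner_sub_sub_nonpos_of_isMinOn hp hmin (C.add_mem hp hq)

theorem inner_sub_self_eq_zero_of_isMinOn (hp : p ∈ C)
    (hmin : IsMinOn (fun q => ‖y - q‖) C p) : ⟪y - p, p⟫ = 0 := by
  have h0 := inner_sub_sub_nonpos_of_isMinOn hp hmin C.zero_mem
  have h2 := inner_sub_sub_nonpos_of_isMinOn hp hmin (C.add_mem hp hp)
  rw [zero_sub, inner_neg_right] at h0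
  rw [add_sub_cancel_right] at h2
  linarith

theorem isMinOn_norm_sub_polar_of_isMinOn (hp : p ∈ C)
    (hmin : IsMinOn (fun q => ‖y - q‖) C p) :
    IsMinOn (fun z => ‖z - y‖) {z | ∀ q ∈ C, ⟪z, q⟫ ≤ 0} (y - p) := by
  intro z hz
  have hzp : ⟪z - (y - p), p⟫ ≤ 0 := by
    rw [inner_sub_left, inner_sub_self_eq_zero_of_isMinOn hp hmin, sub_zero]
    exact hz p hp
  have hsq : ‖y - p - y‖ ^ 2 ≤ ‖z - y‖ ^ 2 :=
    calc ‖y - p - y‖ ^ 2 = ‖p‖ ^ 2 := by rw [sub_sub_cancel_left, norm_neg]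
      _ ≤ ‖z - (y - p)‖ ^ 2 - 2 * ⟪z - (y - p), p⟫ + ‖p‖ ^ 2 := by
        nlinarith [sq_nonneg ‖z - (y - p)‖]
      _ = ‖z - y‖ ^ 2 := by rw [← norm_sub_sq_real, sub_sub, sub_add_cancel]
  exact (sq_le_sq₀ (norm_nonneg _) (norm_nonneg _)).1 hsq

end PointedCone

namespace Matrix

variable {m n : ℕ} (A : Matrix (Fin m) (Fin n) ℝ)

/-- The cone `{Aᵀλ | λ ≥ 0}` generated by the rows of `A`. -/
noncomputable def rowCone : PointedCone ℝ (EuclideanSpace ℝ (Fin n)) :=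
  (PointedCone.positive ℝ (Fin m → ℝ)).map
    ((WithLp.linearEquiv 2 ℝ (Fin n → ℝ)).symm.toLinearMap ∘ₗ Aᵀ.mulVecLin)

theorem toE_transpose_mulVec_mem_rowCone {lam : Fin m → ℝ} (hlam : 0 ≤ lam) :
    toE (Aᵀ *ᵥ lam) ∈ A.rowCone :=
  ⟨lam, hlam, rfl⟩

theorem inner_toE_transpose_mulVec (x : EuclideanSpace ℝ (Fin n)) (lam : Fin m → ℝ) :
    ⟪x, toE (Aᵀ *ᵥ lam)⟫ = A *ᵥ x ⬝ᵥ lam := by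
  rw [EuclideanSpace.inner_eq_star_dotProduct, star_trivial, dotProduct_comm]
  exact (dotProduct_mulVec _ _ _).trans (congrArg (· ⬝ᵥ lam) (vecMul_transpose A _))

theorem forall_mem_rowCone_inner_nonpos_iff (x : EuclideanSpace ℝ (Fin n)) :
    (∀ q ∈ A.rowCone, ⟪x, q⟫ ≤ 0) ↔ ∀ i, (A *ᵥ x) i ≤ 0 := by
  constructor
  · intro h i
    have := h _ <| A.toE_transpose_mulVec_mem_rowCone (lam := Pi.single i 1)
      (Pi.single_nonneg.2 zero_le_one)
    rwa [inner_toE_transpose_mulVec, dotProduct_single, mul_one] at this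
  · rintro h _ ⟨lam, hlam, rfl⟩
    change ⟪x, toE (Aᵀ *ᵥ lam)⟫ ≤ 0
    rw [inner_toE_transpose_mulVec]
    exact Finset.sum_nonpos fun i _ => mul_nonpos_of_nonpos_of_nonneg (h i) (hlam i)

end Matrix

/-- Kuhn–Tucker duality for cone projection: if `λ̂ ≥ 0` minimizes
`‖y - Aᵀλ‖²` over `λ ≥ 0`, then `x̂ = y - Aᵀλ̂` is the projection of `y` onto
`K = {x | Ax ≤ 0}`. -/
theorem dual_min_gives_projection (m n : ℕ) (A : Matrix (Fin m) (Fin n) ℝ)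
    (y : EuclideanSpace ℝ (Fin n)) (lamhat : Fin m → ℝ)
    (hpos : ∀ i, 0 ≤ lamhat i)
    (hmin : ∀ lam : Fin m → ℝ, (∀ i, 0 ≤ lam i) →
      ‖y - toE (Aᵀ.mulVec lamhat)‖ ^ 2 ≤ ‖y - toE (Aᵀ.mulVec lam)‖ ^ 2) :
    y - toE (Aᵀ.mulVec lamhat) ∈
        {x : EuclideanSpace ℝ (Fin n) | ∀ i, A.mulVec x i ≤ 0} ∧
      ∀ z ∈ {x : EuclideanSpace ℝ (Fin n) | ∀ i, A.mulVec x i ≤ 0},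
        ‖(y - toE (Aᵀ.mulVec lamhat)) - y‖ ≤ ‖z - y‖ := by
  have hp := A.toE_transpose_mulVec_mem_rowCone hpos
  have hproj : IsMinOn (fun q => ‖y - q‖) A.rowCone (toE (Aᵀ *ᵥ lamhat)) := by
    rintro _ ⟨lam, hlam, rfl⟩
    exact (sq_le_sq₀ (norm_nonneg _) (norm_nonneg _)).1 (hmin lam hlam)
  exact ⟨(A.forall_mem_rowCone_inner_nonpos_iff _).1
      fun q hq => PointedCone.inner_sub_nonpos_of_isMinOn hp hproj hq,
    fun z hz => PointedCone.isMinOn_norm_sub_polar_of_isMinOn hp hproj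
      ((A.forall_mem_rowCone_inner_nonpos_iff z).2 hz)⟩
end

section
/- Let A ∈ ℝ^{n×r} have pseudoinverse A⁺, let x ∈ ℝⁿ, set w = (I - AA⁺)x and assume w ≠ 0. Then the Moore–Penrose pseudoinverse of the augmented matrix B = [A x] ∈ ℝ^{n×(r+1)} is given by stacking A⁺ - A⁺x w⁺ on top of the row w⁺, where w⁺ = wᵀ/‖w‖². -/
open Matrix

/-- Updating the Moore–Penrose pseudoinverse when a column is appended:
if `A⁺` is the pseudoinverse of `A` (characterized by the four Penrose
conditions), `w = (I - AA⁺)x ≠ 0` and `w⁺ = wᵀ/‖w‖²`, then the pseudoinverse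
of `B = [A x]` is obtained by stacking `A⁺ - A⁺x w⁺` on top of the row `w⁺`. -/
theorem pinv_append_column (n r : ℕ)
    (A : Matrix (Fin n) (Fin r) ℝ) (Ap : Matrix (Fin r) (Fin n) ℝ)
    (h1 : A * Ap * A = A) (h2 : Ap * A * Ap = Ap)
    (h3 : (A * Ap)ᵀ = A * Ap) (h4 : (Ap * A)ᵀ = Ap * A)
    (x : Fin n → ℝ)
    (w : Fin n → ℝ) (hw : w = x - A.mulVec (Ap.mulVec x)) (hwne : w ≠ 0)
    (wp : Fin n → ℝ) (hwp : wp = fun i => w i / ∑ k, w k ^ 2)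
    (B : Matrix (Fin n) (Fin (r + 1)) ℝ)
    (hB : ∀ i j, B i j = if h : (j : ℕ) < r then A i ⟨j, h⟩ else x i)
    (Bp : Matrix (Fin (r + 1)) (Fin n) ℝ)
    (hBp : ∀ j i, Bp j i =
      if h : (j : ℕ) < r then Ap ⟨j, h⟩ i - Ap.mulVec x ⟨j, h⟩ * wp i
      else wp i) :
    B * Bp * B = B ∧ Bp * B * Bp = Bp ∧
      (B * Bp)ᵀ = B * Bp ∧ (Bp * B)ᵀ = Bp * B := by
  set c : ℝ := ∑ k, w k ^ 2 with hcdef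
  have hcpos : 0 < c := by
    rcases Function.ne_iff.mp hwne with ⟨i, hi⟩
    refine Finset.sum_pos' (fun k _ => sq_nonneg _)
      ⟨i, Finset.mem_univ i,
        lt_of_le_of_ne (sq_nonneg _) (Ne.symm (pow_ne_zero 2 hi))⟩
  have hc0 : c ≠ 0 := hcpos.ne'
  -- matrix algebra facts
  have hAt : Aᵀ * (A * Ap) = Aᵀ := by
    rw [← h3, ← Matrix.transpose_mul, Matrix.mul_assoc, ← Matrix.mul_assoc, h1]
  have hAApw : (A * Ap).mulVec w = 0 := by
    rw [hw, Matrix.mulVec_sub, Matrix.mulVec_mulVec, Matrix.mulVec_mulVec,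
      h1, sub_self]
  have hApw : Ap.mulVec w = 0 := by
    have e : Ap.mulVec w = (Ap * (A * Ap)).mulVec w := by
      rw [← Matrix.mul_assoc, h2]
    rw [e, ← Matrix.mulVec_mulVec, hAApw, Matrix.mulVec_zero]
  have hAtw : Aᵀ.mulVec w = 0 := by
    have e : Aᵀ.mulVec w = (Aᵀ * (A * Ap)).mulVec w := by rw [hAt]
    rw [e, ← Matrix.mulVec_mulVec, hAApw, Matrix.mulVec_zero]
  have hwp' : wp = c⁻¹ • w := by
    funext i; simp [hwp, div_eq_inv_mul]
  have hAtwp : Aᵀ.mulVec wp = 0 := by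
    rw [hwp', Matrix.mulVec_smul, hAtw, smul_zero]
  have hAApwp : (A * Ap).mulVec wp = 0 := by
    rw [hwp', Matrix.mulVec_smul, hAApw, smul_zero]
  have hAApsymm : ∀ i k, (A * Ap) i k = (A * Ap) k i := by
    intro i k
    conv_lhs => rw [← h3]
    rw [Matrix.transpose_apply]
  -- scalar facts
  have hwpA : ∀ j, (∑ i, wp i * A i j) = 0 := by
    intro j
    have e := congrFun hAtwp j
    simp only [Matrix.mulVec, dotProduct, Matrix.transpose_apply,
      Pi.zero_apply] at e
    rw [← e]
    exact Finset.sum_congr rfl fun i _ => mul_comm _ _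
  have hwpAAp : ∀ k, (∑ i, wp i * (A * Ap) i k) = 0 := by
    intro k
    have e := congrFun hAApwp k
    simp only [Matrix.mulVec, dotProduct, Pi.zero_apply] at e
    rw [← e]
    exact Finset.sum_congr rfl fun i _ => by rw [hAApsymm i k]; ring
  have hApwsum : ∀ j, (∑ i, Ap j i * w i) = 0 := by
    intro j
    have e := congrFun hApw j
    simpa [Matrix.mulVec, dotProduct] using e
  have hwpw : (∑ i, wp i * w i) = 1 := by
    have e : ∀ i, wp i * w i = c⁻¹ * w i ^ 2 := by
      intro i; rw [hwp']; simp [sq]; ring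
    rw [Finset.sum_congr rfl fun i _ => e i, ← Finset.mul_sum, ← hcdef,
      inv_mul_cancel₀ hc0]
  have hwpAApx : (∑ i, wp i * (A * Ap).mulVec x i) = 0 := by
    have e : (∑ i, wp i * (A * Ap).mulVec x i) = wp ⬝ᵥ (A * Ap).mulVec x := rfl
    rw [e, Matrix.dotProduct_mulVec, ← Matrix.mulVec_transpose, h3,
      hAApwp, zero_dotProduct]
  have hxdecomp : ∀ i, x i = w i + (A * Ap).mulVec x i := by
    intro i
    rw [hw]
    simp [Matrix.mulVec_mulVec]
  have hwpx : (∑ i, wp i * x i) = 1 := by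
    calc (∑ i, wp i * x i)
        = (∑ i, (wp i * w i + wp i * (A * Ap).mulVec x i)) := by
          refine Finset.sum_congr rfl fun i _ => ?_
          rw [← mul_add, ← hxdecomp]
      _ = 1 := by rw [Finset.sum_add_distrib, hwpw, hwpAApx, add_zero]
  -- entries of B and Bp
  have hBc : ∀ i (j : Fin r), B i j.castSucc = A i j := by
    intro i j; simp [hB]
  have hBl : ∀ i, B i (Fin.last r) = x i := by
    intro i; rw [hB, dif_neg (by simp)]
  have hBpc : ∀ (j : Fin r) i,
      Bp j.castSucc i = Ap j i - Ap.mulVec x j * wp i := by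
    intro j i; simp [hBp]
  have hBpl : ∀ i, Bp (Fin.last r) i = wp i := by
    intro i; rw [hBp, dif_neg (by simp)]
  -- B * Bp = A*Ap + w wpᵀ
  have L1 : B * Bp = A * Ap + Matrix.of (fun i k => w i * wp k) := by
    ext i k
    rw [Matrix.mul_apply, Fin.sum_univ_castSucc, hBl, hBpl]
    have e : ∀ j : Fin r, B i j.castSucc * Bp j.castSucc k
        = A i j * Ap j k - (A i j * Ap.mulVec x j) * wp k := by
      intro j; rw [hBc, hBpc]; ring
    rw [Finset.sum_congr rfl fun j _ => e j, Finset.sum_sub_distrib,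
      ← Finset.sum_mul, ← Matrix.mul_apply]
    have hAx : (∑ j, A i j * Ap.mulVec x j) = (A * Ap).mulVec x i := by
      rw [← Matrix.mulVec_mulVec]; rfl
    rw [hAx, Matrix.add_apply, Matrix.of_apply, hxdecomp i]
    ring
  -- (A*Ap + w wpᵀ) * B = B
  have hPB : (A * Ap + Matrix.of (fun i k => w i * wp k)) * B = B := by
    ext i j
    rw [Matrix.mul_apply]
    refine Fin.lastCases ?_ ?_ j
    · simp only [hBl, Matrix.add_apply, Matrix.of_apply]
      have e : ∀ l, ((A * Ap) i l + w i * wp l) * x l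
          = (A * Ap) i l * x l + w i * (wp l * x l) := fun l => by ring
      rw [Finset.sum_congr rfl fun l _ => e l, Finset.sum_add_distrib,
        ← Finset.mul_sum, hwpx, mul_one]
      have hAx : (∑ l, (A * Ap) i l * x l) = (A * Ap).mulVec x i := rfl
      rw [hAx]
      rw [hxdecomp i]
      ring
    · intro j
      simp only [hBc, Matrix.add_apply, Matrix.of_apply]
      have e : ∀ l, ((A * Ap) i l + w i * wp l) * A l j
          = (A * Ap) i l * A l j + w i * (wp l * A l j) := fun l => by ring
      rw [Finset.sum_congr rfl fun l _ => e l, Finset.sum_add_distrib,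
        ← Finset.mul_sum, hwpA, mul_zero, add_zero, ← Matrix.mul_apply, h1]
  have goal1 : B * Bp * B = B := by rw [L1, hPB]
  -- Bp * (A*Ap + w wpᵀ) = Bp
  have hBpP : Bp * (A * Ap + Matrix.of (fun i k => w i * wp k)) = Bp := by
    ext j k
    rw [Matrix.mul_apply]
    refine Fin.lastCases ?_ ?_ j
    · simp only [hBpl, Matrix.add_apply, Matrix.of_apply]
      have e : ∀ i, wp i * ((A * Ap) i k + w i * wp k)
          = wp i * (A * Ap) i k + (wp i * w i) * wp k := fun i => by ring
      rw [Finset.sum_congr rfl fun i _ => e i, Finset.sum_add_distrib,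
        ← Finset.sum_mul, hwpAAp, hwpw, zero_add, one_mul]
    · intro j
      simp only [hBpc, Matrix.add_apply, Matrix.of_apply]
      have e : ∀ i, (Ap j i - Ap.mulVec x j * wp i) * ((A * Ap) i k + w i * wp k)
          = (Ap j i * (A * Ap) i k + (Ap j i * w i) * wp k)
            - Ap.mulVec x j * (wp i * (A * Ap) i k)
            - (Ap.mulVec x j * wp k) * (wp i * w i) := fun i => by ring
      rw [Finset.sum_congr rfl fun i _ => e i, Finset.sum_sub_distrib,
        Finset.sum_sub_distrib, Finset.sum_add_distrib, ← Finset.sum_mul,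
        ← Finset.mul_sum, ← Finset.mul_sum, hApwsum, hwpAAp, hwpw,
        ← Matrix.mul_apply]
      rw [show Ap * (A * Ap) = Ap by rw [← Matrix.mul_assoc, h2]]
      ring
  have goal2 : Bp * B * Bp = Bp := by rw [Matrix.mul_assoc, L1, hBpP]
  -- symmetry of B*Bp
  have goal3 : (B * Bp)ᵀ = B * Bp := by
    rw [L1, Matrix.transpose_add, h3]
    congr 1
    ext i k
    simp only [Matrix.transpose_apply, Matrix.of_apply, hwp', Pi.smul_apply,
      smul_eq_mul]
    ring
  -- entries of Bp * B
  have hE1 : ∀ (j k : Fin r), (Bp * B) j.castSucc k.castSucc = (Ap * A) j k := by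
    intro j k
    rw [Matrix.mul_apply]
    have e : ∀ i, Bp j.castSucc i * B i k.castSucc
        = Ap j i * A i k - Ap.mulVec x j * (wp i * A i k) := by
      intro i; rw [hBpc, hBc]; ring
    rw [Finset.sum_congr rfl fun i _ => e i, Finset.sum_sub_distrib,
      ← Finset.mul_sum, hwpA, mul_zero, sub_zero, ← Matrix.mul_apply]
  have hE2 : ∀ (j : Fin r), (Bp * B) j.castSucc (Fin.last r) = 0 := by
    intro j
    rw [Matrix.mul_apply]
    have e : ∀ i, Bp j.castSucc i * B i (Fin.last r)
        = Ap j i * x i - Ap.mulVec x j * (wp i * x i) := by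
      intro i; rw [hBpc, hBl]; ring
    rw [Finset.sum_congr rfl fun i _ => e i, Finset.sum_sub_distrib,
      ← Finset.mul_sum, hwpx, mul_one]
    have hAx : (∑ i, Ap j i * x i) = Ap.mulVec x j := rfl
    rw [hAx, sub_self]
  have hE3 : ∀ (k : Fin r), (Bp * B) (Fin.last r) k.castSucc = 0 := by
    intro k
    rw [Matrix.mul_apply]
    have e : ∀ i, Bp (Fin.last r) i * B i k.castSucc = wp i * A i k := by
      intro i; rw [hBpl, hBc]
    rw [Finset.sum_congr rfl fun i _ => e i]
    exact hwpA k
  have hE4 : (Bp * B) (Fin.last r) (Fin.last r) = 1 := by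
    rw [Matrix.mul_apply]
    have e : ∀ i, Bp (Fin.last r) i * B i (Fin.last r) = wp i * x i := by
      intro i; rw [hBpl, hBl]
    rw [Finset.sum_congr rfl fun i _ => e i]
    exact hwpx
  have goal4 : (Bp * B)ᵀ = Bp * B := by
    ext j k
    rw [Matrix.transpose_apply]
    refine Fin.lastCases ?_ ?_ j
    · refine Fin.lastCases ?_ ?_ k
      · rfl
      · intro k; rw [hE2, hE3]
    · intro j
      refine Fin.lastCases ?_ ?_ k
      · rw [hE3, hE2]
      · intro k
        rw [hE1, hE1]
        have e := congrFun (congrFun h4 j) k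
        simpa [Matrix.transpose_apply] using e
  exact ⟨goal1, goal2, goal3, goal4⟩
end
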